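/- Cancellation of reduced suffixes: if x̄, ȳ, and w̄ are all reduced words, then red(x̄w̄) = red(ȳw̄) if and only if x̄ = ȳ. -/

import Mathlib

/-- The alphabet {l, r, λ, ρ, n}. -/
inductive Alpha : Type
  | l | r | lam | rho | n
deriving DecidableEq

/-- Finite words over the alphabet. -/
abbrev Word := List Alpha

/-- Immediate reduction ↝′ on words: x̄lλȳ ↝′ x̄ρȳ, x̄rλȳ ↝′ x̄ȳ, x̄λrȳ ↝′ x̄ȳ,
x̄ρrȳ ↝′ x̄lȳ, x̄nnȳ ↝′ x̄ȳ. -/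
inductive Step : Word → Word → Prop
  | llam (x y : Word) : Step (x ++ [.l, .lam] ++ y) (x ++ [.rho] ++ y)
  | rlam (x y : Word) : Step (x ++ [.r, .lam] ++ y) (x ++ y)
  | lamr (x y : Word) : Step (x ++ [.lam, .r] ++ y) (x ++ y)
  | rhor (x y : Word) : Step (x ++ [.rho, .r] ++ y) (x ++ [.l] ++ y)
  | nn (x y : Word) : Step (x ++ [.n, .n] ++ y) (x ++ y)

/-- A word is reduced if no immediate reduction step applies to it. -/
def Reduced (w : Word) : Prop := ∀ v, ¬ Step w v

/-- Reduction ↝ is the reflexive-transitive closure of immediate reduction. -/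
def Reduces : Word → Word → Prop := Relation.ReflTransGen Step

open Classical in
/-- red(w): the (unique) reduced word to which w reduces. -/
noncomputable def red (w : Word) : Word :=
  if h : ∃ v, Reduces w v ∧ Reduced v then h.choose else w

/-- bad a b means [a, b] is a redex. -/
def bad : Alpha → Alpha → Bool
  | .l, .lam => true
  | .r, .lam => true
  | .lam, .r => true
  | .rho, .r => true
  | .n, .n => true
  | _, _ => false

/-- push a letter onto a reversed word, reducing at the boundary. -/
def pushR : Word → Alpha → Word
  | .l :: s, .lam => .rho :: s
  | .r :: s, .lam => s
  | .lam :: s, .r => s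
  | .rho :: s, .r => .l :: s
  | .n :: s, .n => s
  | s, a => a :: s

/-- Good s : the reversed word s represents a reduced word. -/
def Good (s : Word) : Prop := List.Chain' (fun a b => bad b a = false) s

lemma good_nil : Good [] := List.isChain_nil

lemma good_tail {b : Alpha} {t : Word} (h : Good (b :: t)) : Good t := h.tail

lemma pushR_not_bad {s : Word} {a : Alpha}
    (h : ∀ b ∈ s.head?, bad b a = false) : pushR s a = a :: s := by
  rcases s with _ | ⟨b, t⟩
  · cases a <;> rfl
  · have hb := h b rfl
    cases a <;> cases b <;> simp_all [pushR, bad]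

lemma good_pushR {s : Word} {a : Alpha} (h : Good s) : Good (pushR s a) := by
  rcases s with _ | ⟨b, t⟩
  · cases a <;> simp [Good, pushR, List.Chain']
  · have ht : Good t := h.tail
    have hb : ∀ c ∈ t.head?, bad c b = false := List.isChain_cons.mp h |>.1
    cases a <;> cases b <;>
      first
        | exact ht
        | exact List.isChain_cons.mpr
            ⟨fun c hc => by cases c <;> simp_all [bad], ht⟩
        | exact List.isChain_cons.mpr
            ⟨fun c hc => by cases c <;> simp_all [bad], h⟩

lemma good_foldl {s : Word} (h : Good s) (w : Word) :
    Good (List.foldl pushR s w) := by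
  induction w generalizing s with
  | nil => exact h
  | cons a t ih => exact ih (good_pushR h)

lemma pushR_l (s : Word) : pushR s .l = .l :: s := by
  rcases s with _ | ⟨b, t⟩
  · rfl
  · cases b <;> rfl

lemma pushR_rho (s : Word) : pushR s .rho = .rho :: s := by
  rcases s with _ | ⟨b, t⟩
  · rfl
  · cases b <;> rfl

lemma key_llam (s : Word) : pushR (pushR s .l) .lam = pushR s .rho := by
  rw [pushR_l, pushR_rho]; rfl

lemma key_rhor (s : Word) : pushR (pushR s .rho) .r = pushR s .l := by
  rw [pushR_l, pushR_rho]; rfl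

lemma key_rlam {s : Word} (h : Good s) : pushR (pushR s .r) .lam = s := by
  rcases s with _ | ⟨b, t⟩
  · rfl
  · have hb : ∀ c ∈ t.head?, bad c b = false := List.isChain_cons.mp h |>.1
    cases b
    · rfl
    · rfl
    · -- s = lam :: t : pushR s r = t, then need pushR t lam = lam :: t
      show pushR t .lam = .lam :: t
      exact pushR_not_bad hb
    · rfl
    · rfl

lemma key_lamr {s : Word} (h : Good s) : pushR (pushR s .lam) .r = s := by
  rcases s with _ | ⟨b, t⟩
  · rfl
  · have hb : ∀ c ∈ t.head?, bad c b = false := List.isChain_cons.mp h |>.1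
    cases b
    · rfl
    · -- s = r :: t : pushR s lam = t, then pushR t r = r :: t
      show pushR t .r = .r :: t
      exact pushR_not_bad hb
    · rfl
    · rfl
    · rfl

lemma key_nn {s : Word} (h : Good s) : pushR (pushR s .n) .n = s := by
  rcases s with _ | ⟨b, t⟩
  · rfl
  · have hb : ∀ c ∈ t.head?, bad c b = false := List.isChain_cons.mp h |>.1
    cases b
    · rfl
    · rfl
    · rfl
    · rfl
    · show pushR t .n = .n :: t
      exact pushR_not_bad hb

lemma foldl_step {w v : Word} (h : Step w v) :
    List.foldl pushR [] w = List.foldl pushR [] v := by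
  cases h with
  | llam x y =>
      simp only [List.foldl_append, List.foldl_cons, List.foldl_nil]
      rw [key_llam]
  | rlam x y =>
      simp only [List.foldl_append, List.foldl_cons, List.foldl_nil]
      rw [key_rlam (good_foldl good_nil x)]
  | lamr x y =>
      simp only [List.foldl_append, List.foldl_cons, List.foldl_nil]
      rw [key_lamr (good_foldl good_nil x)]
  | rhor x y =>
      simp only [List.foldl_append, List.foldl_cons, List.foldl_nil]
      rw [key_rhor]
  | nn x y =>
      simp only [List.foldl_append, List.foldl_cons, List.foldl_nil]
      rw [key_nn (good_foldl good_nil x)]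

lemma foldl_reduces {z v : Word} (h : Reduces z v) :
    List.foldl pushR [] z = List.foldl pushR [] v := by
  induction h with
  | refl => rfl
  | tail _ h2 ih => rw [ih, foldl_step h2]

lemma step_length {w v : Word} (h : Step w v) : v.length < w.length := by
  cases h <;> simp [List.length_append] <;> omega

lemma exists_nf (z : Word) : ∃ v, Reduces z v ∧ Reduced v := by
  generalize hn : z.length = n
  induction n using Nat.strong_induction_on generalizing z with
  | _ n ih =>
    by_cases h : Reduced z
    · exact ⟨z, Relation.ReflTransGen.refl, h⟩
    · simp only [Reduced, not_forall, not_not] at h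
      obtain ⟨v, hv⟩ := h
      obtain ⟨u, hu1, hu2⟩ := ih v.length (hn ▸ step_length hv) v rfl
      exact ⟨u, Relation.ReflTransGen.head hv hu1, hu2⟩

lemma step_cons {a : Alpha} {w v : Word} (h : Step w v) : Step (a :: w) (a :: v) := by
  cases h with
  | llam x y => simpa using Step.llam (a :: x) y
  | rlam x y => simpa using Step.rlam (a :: x) y
  | lamr x y => simpa using Step.lamr (a :: x) y
  | rhor x y => simpa using Step.rhor (a :: x) y
  | nn x y => simpa using Step.nn (a :: x) y

lemma reduced_chain : ∀ {w : Word}, Reduced w →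
    List.Chain' (fun a b => bad a b = false) w := by
  intro w
  induction w with
  | nil => intro _; exact List.isChain_nil
  | cons a t ih =>
    intro h
    rcases t with _ | ⟨b, u⟩
    · exact List.isChain_singleton a
    · have ht : Reduced (b :: u) := fun v hv => h (a :: v) (step_cons hv)
      refine List.isChain_cons_cons.mpr ⟨?_, ih ht⟩
      by_contra hb
      cases a <;> cases b <;> simp [bad] at hb <;>
        first
          | exact h _ (by simpa using Step.llam [] u)
          | exact h _ (by simpa using Step.rlam [] u)
          | exact h _ (by simpa using Step.lamr [] u)
          | exact h _ (by simpa using Step.rhor [] u)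
          | exact h _ (by simpa using Step.nn [] u)

lemma foldl_of_chain : ∀ (w s : Word), Good s →
    (∀ b ∈ s.head?, ∀ a ∈ w.head?, bad b a = false) →
    List.Chain' (fun a b => bad a b = false) w →
    List.foldl pushR s w = w.reverse ++ s := by
  intro w
  induction w with
  | nil => intro s _ _ _; simp
  | cons a t ih =>
    intro s hs hbd hc
    have h1 : pushR s a = a :: s :=
      pushR_not_bad (fun b hb => hbd b hb a rfl)
    have hgs : Good (a :: s) :=
      List.isChain_cons.mpr ⟨fun b hb => hbd b hb a rfl, hs⟩
    have hbd' : ∀ b ∈ (a :: s).head?, ∀ c ∈ t.head?, bad b c = false := by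
      intro b hb c hcc
      simp only [List.head?_cons, Option.mem_some_iff] at hb
      subst hb
      exact (List.isChain_cons.mp hc).1 c hcc
    rw [List.foldl_cons, h1, ih (a :: s) hgs hbd' (List.isChain_cons.mp hc).2]
    simp

lemma foldl_reduced {v : Word} (h : Reduced v) :
    List.foldl pushR [] v = v.reverse := by
  have := foldl_of_chain v [] good_nil (by simp) (reduced_chain h)
  simpa using this

lemma red_spec (z : Word) : Reduces z (red z) ∧ Reduced (red z) := by
  unfold red
  rw [dif_pos (exists_nf z)]
  exact (exists_nf z).choose_spec

lemma red_eq_rev (z : Word) : red z = (List.foldl pushR [] z).reverse := by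
  obtain ⟨h1, h2⟩ := red_spec z
  rw [foldl_reduces h1, foldl_reduced h2, List.reverse_reverse]

set_option maxHeartbeats 2000000 in
lemma pushR_inj {s t : Word} {a : Alpha} (hs : Good s) (ht : Good t)
    (h : pushR s a = pushR t a) : s = t := by
  rcases s with _ | ⟨b, s⟩ <;> rcases t with _ | ⟨c, t⟩
  case nil.nil => rfl
  case nil.cons =>
    cases a <;> cases c <;>
      first
        | rfl
        | (simp only [pushR, List.cons.injEq] at h
           try subst_vars
           simp_all [Good, List.Chain', List.isChain_cons, bad])
  case cons.nil =>
    cases a <;> cases b <;>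
      first
        | rfl
        | (simp only [pushR, List.cons.injEq] at h
           try subst_vars
           simp_all [Good, List.Chain', List.isChain_cons, bad])
  case cons.cons =>
    cases a <;> cases b <;> cases c <;>
      first
        | rfl
        | (simp only [pushR, List.cons.injEq] at h
           try subst_vars
           simp_all [Good, List.Chain', List.isChain_cons, bad])

lemma foldl_inj : ∀ (w s t : Word), Good s → Good t →
    List.foldl pushR s w = List.foldl pushR t w → s = t := by
  intro w
  induction w with
  | nil => intro s t _ _ h; exact h
  | cons a u ih =>
    intro s t hs ht h
    exact pushR_inj hs ht (ih _ _ (good_pushR hs) (good_pushR ht) h)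

lemma good_of_reduced {x : Word} (hx : Reduced x) : Good x.reverse := by
  have := reduced_chain hx
  exact List.isChain_reverse.mpr this

/-- Cancellation of reduced suffixes: for reduced words x̄, ȳ, w̄,
red(x̄w̄) = red(ȳw̄) iff x̄ = ȳ. -/
theorem reduced_suffix_cancellation {x y w : Word}
    (hx : Reduced x) (hy : Reduced y) (hw : Reduced w) :
    red (x ++ w) = red (y ++ w) ↔ x = y := by
  constructor
  · intro h
    rw [red_eq_rev, red_eq_rev] at h
    have h2 : List.foldl pushR [] (x ++ w) = List.foldl pushR [] (y ++ w) :=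
      List.reverse_injective h
    rw [List.foldl_append, List.foldl_append, foldl_reduced hx, foldl_reduced hy] at h2
    have := foldl_inj w x.reverse y.reverse (good_of_reduced hx) (good_of_reduced hy) h2
    exact List.reverse_injective this
  · intro h; rw [h]
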